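/- Let L > 0 and σ ∈ {1, −1}, and let A be the real 4×4 matrix with rows: (37σ/(64√3 L⁷), 19σ/(64√3 L⁷), −11/(64L⁷), 3/(64L⁷)); (19σ/(64√3 L⁷), 37σ/(64√3 L⁷), 3/(64L⁷), −11/(64L⁷)); (107/(192L⁷), 29/(192L⁷), −37σ/(64√3 L⁷), −19σ/(64√3 L⁷)); (29/(192L⁷), 107/(192L⁷), −19σ/(64√3 L⁷), −37σ/(64√3 L⁷)). Then the characteristic polynomial of A is λ⁴ − (5/(48 L¹⁴))·λ² − 1/(96 L²⁸), and the eigenvalues of A over ℂ are exactly 1/(√6 L⁷), −1/(√6 L⁷), i/(4L⁷), −i/(4L⁷). In particular A has a real eigenvalue 1/(√6 L⁷) > 0. -/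

import Mathlib

open Real Matrix Polynomial Complex

/-- The linearization matrix `A_{5,6}` at the circular polar relative equilibria `E₅, E₆`. -/
noncomputable def A56 (L σ : ℝ) : Matrix (Fin 4) (Fin 4) ℝ :=
  !![37 * σ / (64 * Real.sqrt 3 * L ^ 7), 19 * σ / (64 * Real.sqrt 3 * L ^ 7),
      -11 / (64 * L ^ 7), 3 / (64 * L ^ 7);
     19 * σ / (64 * Real.sqrt 3 * L ^ 7), 37 * σ / (64 * Real.sqrt 3 * L ^ 7),
      3 / (64 * L ^ 7), -11 / (64 * L ^ 7);
     107 / (192 * L ^ 7), 29 / (192 * L ^ 7), -(37 * σ) / (64 * Real.sqrt 3 * L ^ 7),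
      -(19 * σ) / (64 * Real.sqrt 3 * L ^ 7);
     29 / (192 * L ^ 7), 107 / (192 * L ^ 7), -(19 * σ) / (64 * Real.sqrt 3 * L ^ 7),
      -(37 * σ) / (64 * Real.sqrt 3 * L ^ 7)]

/-! The swap `x₁ ↔ x₂, x₃ ↔ x₄` commutes with `A56 L σ`, so the matrix splits into two trace-free
`2 × 2` blocks, on the symmetric and the antisymmetric vectors, with determinants `-1/(6L¹⁴)` and
`1/(16L¹⁴)`. Hence its characteristic polynomial is `(λ² - 1/(6L¹⁴))(λ² + 1/(16L¹⁴))`, whose roots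
are the four claimed eigenvalues; the real one is already an eigenvalue over `ℝ` because the
characteristic polynomial commutes with base change. -/

lemma biquadratic_eq_zero_iff {R : Type*} [CommRing R] [NoZeroDivisors R] {a b p q z : R}
    (hp : a ^ 2 + b ^ 2 = p) (hq : a ^ 2 * b ^ 2 = -q) :
    z ^ 4 - p * z ^ 2 - q = 0 ↔ z = a ∨ z = -a ∨ z = b ∨ z = -b := by
  have hfactor : z ^ 4 - p * z ^ 2 - q = (z - a) * (z + a) * (z - b) * (z + b) := by
    rw [← hp, ← neg_neg q, ← hq]
    ring
  simp only [hfactor, mul_eq_zero, sub_eq_zero, add_eq_zero_iff_eq_neg, or_assoc]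

lemma Matrix.map_mem_spectrum_map_iff {K L n : Type*} [Field K] [Field L] [Fintype n]
    [DecidableEq n] (f : K →+* L) (M : Matrix n n K) (r : K) :
    f r ∈ spectrum L (M.map f) ↔ r ∈ spectrum K M := by
  simp only [mem_spectrum_iff_isRoot_charpoly, charpoly_map, IsRoot.def, eval_map,
    eval₂_at_apply, map_eq_zero]

lemma A56_charpoly {L σ : ℝ} (hL : L ≠ 0) (hσ : σ ^ 2 = 1) :
    (A56 L σ).charpoly = X ^ 4 - C (5 / (48 * L ^ 14)) * X ^ 2 - C (1 / (96 * L ^ 28)) := by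
  have hs : √3 ^ 2 = 3 := Real.sq_sqrt (by norm_num)
  have hs4 : √3 ^ 4 = 9 := by linear_combination (√3 ^ 2 + 3) * hs
  have hσ4 : σ ^ 4 = 1 := by linear_combination (σ ^ 2 + 1) * hσ
  refine Polynomial.funext fun x => ?_
  rw [eval_charpoly, Matrix.det_succ_row_zero]
  simp [Fin.sum_univ_succ, Matrix.det_fin_three, A56, Fin.succAbove]
  field_simp
  ring_nf
  simp only [hs, hs4, hσ, hσ4]
  ring

lemma A56_map_ofReal_spectrum {L σ : ℝ} (hL : L ≠ 0) (hσ : σ ^ 2 = 1) :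
    spectrum ℂ ((A56 L σ).map Complex.ofReal)
      = {((1 / (√6 * L ^ 7) : ℝ) : ℂ), ((-(1 / (√6 * L ^ 7)) : ℝ) : ℂ),
         Complex.I / (4 * (L : ℂ) ^ 7), -(Complex.I / (4 * (L : ℂ) ^ 7))} := by
  have hL' : (L : ℂ) ≠ 0 := by exact_mod_cast hL
  have h6 : ((√6 : ℝ) : ℂ) ^ 2 = 6 := by
    rw [← Complex.ofReal_pow, Real.sq_sqrt (by norm_num)]
    norm_num
  ext z
  rw [show (A56 L σ).map Complex.ofReal = (A56 L σ).map Complex.ofRealHom from rfl,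
    mem_spectrum_iff_isRoot_charpoly, charpoly_map, A56_charpoly hL hσ]
  simp only [IsRoot.def, eval_map, eval₂_sub, eval₂_mul, eval₂_X_pow, eval₂_C,
    Complex.ofRealHom_eq_coe, Set.mem_insert_iff, Set.mem_singleton_iff, Complex.ofReal_neg]
  refine biquadratic_eq_zero_iff ?_ ?_ <;>
  · push_cast
    field_simp
    rw [h6, Complex.I_sq]
    ring

/-- The linearization at the polar equilibria `E₅, E₆` has characteristic
polynomial `λ⁴ − 5λ²/(48L¹⁴) − 1/(96L²⁸)` and eigenvalues `±1/(√6 L⁷)`, `±i/(4L⁷)`;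
in particular it has the positive real eigenvalue `1/(√6 L⁷)`. -/
theorem linearization_polar56_spectrum (L : ℝ) (hL : 0 < L) (σ : ℝ)
    (hσ : σ = 1 ∨ σ = -1) :
    (A56 L σ).charpoly = X ^ 4 - C (5 / (48 * L ^ 14)) * X ^ 2 - C (1 / (96 * L ^ 28)) ∧
    spectrum ℂ ((A56 L σ).map Complex.ofReal)
      = {((1 / (Real.sqrt 6 * L ^ 7) : ℝ) : ℂ), ((-(1 / (Real.sqrt 6 * L ^ 7)) : ℝ) : ℂ),
         Complex.I / (4 * (L : ℂ) ^ 7), -(Complex.I / (4 * (L : ℂ) ^ 7))} ∧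
    (1 / (Real.sqrt 6 * L ^ 7) : ℝ) ∈ spectrum ℝ (A56 L σ) ∧
    (0 : ℝ) < 1 / (Real.sqrt 6 * L ^ 7) := by
  have hσ2 : σ ^ 2 = 1 := by rcases hσ with rfl | rfl <;> norm_num
  have hspec := A56_map_ofReal_spectrum hL.ne' hσ2
  refine ⟨A56_charpoly hL.ne' hσ2, hspec, ?_, by positivity⟩
  rw [← Matrix.map_mem_spectrum_map_iff Complex.ofRealHom]
  exact hspec ▸ Set.mem_insert _ _
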